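/- arXiv:1411.6564 — 3 statements merged into one kernel-verified Lean document; each statement's English description precedes it below -/
import Mathlib

section
/- Let α, β ∈ ℝ. Consider the map H : ℝ × S¹ → ℂ² defined by H(t, (x₀,x₁)) = (e^{-t} x₀ + e^{t} e^{iα} x₀, e^{-t} x₁ + e^{t} e^{iβ} x₁) for (x₀,x₁) ∈ ℝ² with x₀² + x₁² = 1. If sin α = sin β, then the image of H is an isotropic (hence, where it is a 2-dimensional submanifold, Lagrangian) subset of ℂ² with the standard symplectic form ω = dx₀∧dy₀ + dx₁∧dy₁; equivalently, the pullback of ω by H vanishes identically. -/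
open Complex Real

/-- The standard symplectic form on `ℂ × ℂ`:
`ω((u₁,u₂),(v₁,v₂)) = Im(conj u₁ · v₁) + Im(conj u₂ · v₂)`. -/
noncomputable def stdSymp (u v : ℂ × ℂ) : ℝ :=
  ((starRingEnd ℂ) u.1 * v.1).im + ((starRingEnd ℂ) u.2 * v.2).im

/-- The handle map `H(t,(x₀,x₁)) = (e^{-t}x₀ + e^{t}e^{iα}x₀, e^{-t}x₁ + e^{t}e^{iβ}x₁)`. -/
noncomputable def handle (α β : ℝ) (t x₀ x₁ : ℝ) : ℂ × ℂ :=
  (Real.exp (-t) * x₀ + Real.exp t * Complex.exp (α * Complex.I) * x₀,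
   Real.exp (-t) * x₁ + Real.exp t * Complex.exp (β * Complex.I) * x₁)

/-- The partial derivative of `handle` in the `t`-direction. -/
noncomputable def handleDt (α β : ℝ) (t x₀ x₁ : ℝ) : ℂ × ℂ :=
  (-Real.exp (-t) * x₀ + Real.exp t * Complex.exp (α * Complex.I) * x₀,
   -Real.exp (-t) * x₁ + Real.exp t * Complex.exp (β * Complex.I) * x₁)

/-- The partial derivative of `handle` in the circle direction: at `(x₀,x₁)` on the unit
circle the tangent direction is `(-x₁, x₀)`. -/
noncomputable def handleDθ (α β : ℝ) (t x₀ x₁ : ℝ) : ℂ × ℂ :=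
  (Real.exp (-t) * (-x₁) + Real.exp t * Complex.exp (α * Complex.I) * (-x₁),
   Real.exp (-t) * x₀ + Real.exp t * Complex.exp (β * Complex.I) * x₀)

theorem im_conj_neg_add_mul_mul_add_mul (a b x y : ℝ) (z : ℂ) :
    ((starRingEnd ℂ) (-a * x + b * z * x) * (a * y + b * z * y)).im =
      -2 * a * b * x * y * z.im := by
  simp only [mul_im, mul_re, add_re, add_im, neg_re, neg_im, conj_re, conj_im, ofReal_re,
    ofReal_im]
  ring

theorem stdSymp_handleDt_handleDθ (α β t x₀ x₁ : ℝ) :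
    stdSymp (handleDt α β t x₀ x₁) (handleDθ α β t x₀ x₁) =
      2 * x₀ * x₁ * (Real.sin α - Real.sin β) := by
  rw [stdSymp, handleDt, handleDθ, ← ofReal_neg x₁, im_conj_neg_add_mul_mul_add_mul,
    im_conj_neg_add_mul_mul_add_mul, exp_ofReal_mul_I_im, exp_ofReal_mul_I_im,
    Real.exp_neg]
  field_simp
  ring

theorem handle_isotropic_general (α β : ℝ) (h : Real.sin α = Real.sin β)
    (t x₀ x₁ : ℝ) :
    stdSymp (handleDt α β t x₀ x₁) (handleDθ α β t x₀ x₁) = 0 := by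
  rw [stdSymp_handleDt_handleDθ, h, sub_self, mul_zero]

/-- If `sin α = sin β`, the pullback of the standard symplectic form of `ℂ²` under the
handle map `H` vanishes identically: `ω(∂ₜH, ∂_θH) = 0` at every point of
`ℝ × {x₀² + x₁² = 1}`; i.e. the image of `H` is isotropic (Lagrangian where it is a
`2`-dimensional submanifold). -/
theorem handle_isotropic (α β : ℝ) (h : Real.sin α = Real.sin β)
    (t x₀ x₁ : ℝ) (hx : x₀ ^ 2 + x₁ ^ 2 = 1) :
    stdSymp (handleDt α β t x₀ x₁) (handleDθ α β t x₀ x₁) = 0 :=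
  handle_isotropic_general α β h t x₀ x₁
end

section
/- With the same setup, if sin α = −sin β, then the pullback of the standard symplectic form of ℂ² under the map H'(t,(x₀,x₁)) = (e^{-t}x₀ + e^{t}e^{iα}x₀, e^{-t}x₁ − e^{t}e^{iβ}x₁) (for x₀²+x₁²=1, t ∈ ℝ) vanishes identically. -/
open Complex Real

/-- The modified handle map
`H'(t,(x₀,x₁)) = (e^{-t}x₀ + e^{t}e^{iα}x₀, e^{-t}x₁ + e^{t}e^{iβ}(−x₁))`. -/
noncomputable def handle' (α β : ℝ) (t x₀ x₁ : ℝ) : ℂ × ℂ :=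
  (Real.exp (-t) * x₀ + Real.exp t * Complex.exp (α * Complex.I) * x₀,
   Real.exp (-t) * x₁ + Real.exp t * Complex.exp (β * Complex.I) * (-x₁))

/-- The partial derivative of `handle'` in the `t`-direction. -/
noncomputable def handle'Dt (α β : ℝ) (t x₀ x₁ : ℝ) : ℂ × ℂ :=
  (-Real.exp (-t) * x₀ + Real.exp t * Complex.exp (α * Complex.I) * x₀,
   -Real.exp (-t) * x₁ + Real.exp t * Complex.exp (β * Complex.I) * (-x₁))

/-- The partial derivative of `handle'` in the circle direction: at `(x₀,x₁)` on the unit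
circle the tangent direction is `(-x₁, x₀)`. -/
noncomputable def handle'Dθ (α β : ℝ) (t x₀ x₁ : ℝ) : ℂ × ℂ :=
  (Real.exp (-t) * (-x₁) + Real.exp t * Complex.exp (α * Complex.I) * (-x₁),
   Real.exp (-t) * x₀ + Real.exp t * Complex.exp (β * Complex.I) * (-x₀))

/-! In each coordinate only the cross terms between `e^{-t}` and `e^{t}e^{iθ}` contribute to the
imaginary part, giving `2 x₀ x₁ sin θ` once `e^{-t} e^{t} = 1` is used; so the pullback is
`2 x₀ x₁ (sin α + sin β)`. -/

theorem im_conj_add_mul_exp_mul_add (b c d θ : ℝ) :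
    ((starRingEnd ℂ) (c + b * exp (θ * I)) * (d + b * exp (θ * I))).im
      = b * (c - d) * Real.sin θ := by
  simp only [exp_mul_I, mul_im, conj_re, conj_im, add_re, add_im, mul_re, ofReal_re,
    ofReal_im, I_re, I_im, cos_ofReal_re, cos_ofReal_im, sin_ofReal_re, sin_ofReal_im]
  ring

theorem stdSymp_handle'Dt_handle'Dθ (α β t x₀ x₁ : ℝ) :
    stdSymp (handle'Dt α β t x₀ x₁) (handle'Dθ α β t x₀ x₁)
      = 2 * x₀ * x₁ * (Real.sin α + Real.sin β) := by
  set a := Real.exp (-t)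
  set b := Real.exp t
  have hab : a * b = 1 := by rw [← Real.exp_add, neg_add_cancel, Real.exp_zero]
  have fst_term : (starRingEnd ℂ) (handle'Dt α β t x₀ x₁).1 * (handle'Dθ α β t x₀ x₁).1
      = (starRingEnd ℂ) (-a + b * exp (α * I)) * (a + b * exp (α * I)) * (-(x₀ * x₁) : ℝ) := by
    simp only [handle'Dt, handle'Dθ, map_add, map_mul, map_neg, conj_ofReal, ofReal_neg,
      ofReal_mul]
    ring
  have snd_term : (starRingEnd ℂ) (handle'Dt α β t x₀ x₁).2 * (handle'Dθ α β t x₀ x₁).2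
      = (starRingEnd ℂ) (a + b * exp (β * I)) * (-a + b * exp (β * I)) * (x₀ * x₁ : ℝ) := by
    simp only [handle'Dt, handle'Dθ, map_add, map_mul, map_neg, conj_ofReal, ofReal_mul]
    ring
  rw [stdSymp, fst_term, snd_term, im_mul_ofReal, im_mul_ofReal, ← ofReal_neg,
    im_conj_add_mul_exp_mul_add, im_conj_add_mul_exp_mul_add]
  linear_combination (2 * x₀ * x₁ * (Real.sin α + Real.sin β)) * hab

theorem handle'_isotropic_general (α β : ℝ) (h : Real.sin α = -Real.sin β)
    (t x₀ x₁ : ℝ) :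
    stdSymp (handle'Dt α β t x₀ x₁) (handle'Dθ α β t x₀ x₁) = 0 := by
  rw [stdSymp_handle'Dt_handle'Dθ, h, neg_add_cancel, mul_zero]

/-- If `sin α = −sin β`, the pullback of the standard symplectic form of `ℂ²` under the
modified handle map `H'` vanishes identically on `ℝ × {x₀² + x₁² = 1}`. -/
theorem handle'_isotropic (α β : ℝ) (h : Real.sin α = -Real.sin β)
    (t x₀ x₁ : ℝ) (hx : x₀ ^ 2 + x₁ ^ 2 = 1) :
    stdSymp (handle'Dt α β t x₀ x₁) (handle'Dθ α β t x₀ x₁) = 0 :=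
  handle'_isotropic_general α β h t x₀ x₁
end

section
/- Let L₀ = {[x₀:x₁:x₂] ∈ ℂP² : x₀,x₁,x₂ ∈ ℝ} and L₁ = {[e^{iπ/3}x₀ : e^{−iπ/3}x₁ : x₂] : x₀,x₁,x₂ ∈ ℝ}. Then L₀ ∩ L₁ = {[0:0:1], [0:1:0], [1:0:0]}. -/
open Complex Real

noncomputable section

/-- The `j`-th standard basis vector of `ℂ³`. -/
def stdVec (j : Fin 3) : Fin 3 → ℂ := fun i => if i = j then 1 else 0

theorem stdVec_ne_zero (j : Fin 3) : stdVec j ≠ 0 := by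
  intro h
  have := congrFun h j
  simp [stdVec] at this

/-- The standard real projective plane `L₀ = {[x₀:x₁:x₂] : xᵢ ∈ ℝ}` in `ℂP²`. -/
def realRP2 : Set (Projectivization ℂ (Fin 3 → ℂ)) :=
  {p | ∃ (z : Fin 3 → ℂ) (hz : z ≠ 0), (∀ i, (z i).im = 0) ∧ p = Projectivization.mk ℂ z hz}

/-- The rotated copy `L₁ = {[e^{iπ/3}x₀ : e^{−iπ/3}x₁ : x₂] : xᵢ ∈ ℝ}` in `ℂP²`. -/
def rotRP2 : Set (Projectivization ℂ (Fin 3 → ℂ)) :=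
  {p | ∃ (x : Fin 3 → ℝ) (hz : ![Complex.exp (π / 3 * I) * x 0,
        Complex.exp (-(π / 3) * I) * x 1, (x 2 : ℂ)] ≠ 0),
      p = Projectivization.mk ℂ _ hz}

/-!
A point of `L₁` has a representative `(e^{iθ₀}x₀, e^{iθ₁}x₁, x₂)` with `x` real and
`θ = (π/3, -π/3, 0)`. If it also lies on `L₀`, some nonzero multiple `a` of it is real, so for two
nonzero coordinates `j ≠ k` the product `a e^{iθⱼ}xⱼ · conj (a e^{iθₖ}xₖ) = |a|² xⱼ xₖ e^{i(θⱼ-θₖ)}`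
is real, i.e. `sin (θⱼ - θₖ) = 0`. Since `0 < |θⱼ - θₖ| < π` this is impossible, so only one
coordinate is nonzero and the point is a coordinate point.
-/

open ComplexConjugate

theorem Complex.im_mul_conj_eq_zero_of_im_mul_ofReal_eq_zero {a u v : ℂ} {r s : ℝ} (ha : a ≠ 0)
    (hr : r ≠ 0) (hs : s ≠ 0) (hu : (a * (u * r)).im = 0) (hv : (a * (v * s)).im = 0) :
    (u * conj v).im = 0 := by
  have hprod : (a * (u * r)) * conj (a * (v * s)) = ↑(normSq a * r * s) * (u * conj v) := by
    simp only [map_mul, conj_ofReal]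
    push_cast
    rw [normSq_eq_conj_mul_self]
    ring
  have hprod_im : ((a * (u * r)) * conj (a * (v * s))).im = 0 := by
    rw [mul_im, hu, conj_im, hv]
    ring
  rw [hprod, im_ofReal_mul] at hprod_im
  exact (mul_eq_zero.1 hprod_im).resolve_left
    (mul_ne_zero (mul_ne_zero (normSq_pos.2 ha).ne' hr) hs)

theorem Complex.im_exp_mul_I_mul_conj_exp_mul_I (θ φ : ℝ) :
    (exp (θ * I) * conj (exp (φ * I))).im = Real.sin (θ - φ) := by
  rw [← exp_conj, ← exp_add, map_mul, conj_ofReal, conj_I, ← exp_ofReal_mul_I_im]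
  congr 2
  push_cast
  ring

def rotAngle : Fin 3 → ℝ := ![π / 3, -(π / 3), 0]

theorem sin_rotAngle_sub_ne_zero {j k : Fin 3} (hjk : j ≠ k) :
    Real.sin (rotAngle j - rotAngle k) ≠ 0 := by
  have hπ := Real.pi_pos
  fin_cases j <;> fin_cases k <;> simp only [ne_eq, not_true_eq_false] at hjk <;>
    rw [Ne, Real.sin_eq_zero_iff_of_lt_of_lt] <;> simp [rotAngle] <;> linarith

def rotVec (x : Fin 3 → ℝ) : Fin 3 → ℂ := fun j => exp (rotAngle j * I) * x j

theorem rotVec_eq (x : Fin 3 → ℝ) :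
    rotVec x = ![exp (π / 3 * I) * x 0, exp (-(π / 3) * I) * x 1, (x 2 : ℂ)] := by
  funext j
  fin_cases j <;> simp [rotVec, rotAngle]

theorem eq_zero_of_im_mul_rotVec_eq_zero {a : ℂ} (ha : a ≠ 0) {x : Fin 3 → ℝ}
    (hreal : ∀ j, (a * rotVec x j).im = 0) {j k : Fin 3} (hjk : j ≠ k) (hj : x j ≠ 0) :
    x k = 0 := by
  by_contra hk
  apply sin_rotAngle_sub_ne_zero hjk
  rw [← im_exp_mul_I_mul_conj_exp_mul_I]
  exact im_mul_conj_eq_zero_of_im_mul_ofReal_eq_zero ha hj hk (hreal j) (hreal k)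

theorem mk_eq_mk_stdVec {v : Fin 3 → ℂ} (hv : v ≠ 0) {j : Fin 3} (h : ∀ k ≠ j, v k = 0) :
    Projectivization.mk ℂ v hv = Projectivization.mk ℂ (stdVec j) (stdVec_ne_zero j) := by
  refine (Projectivization.mk_eq_mk_iff' ℂ _ _ hv _).2 ⟨v j, funext fun k => ?_⟩
  by_cases hk : k = j
  · simp [stdVec, hk]
  · simp [stdVec, hk, h k hk]

theorem mem_rotRP2_iff {p : Projectivization ℂ (Fin 3 → ℂ)} :
    p ∈ rotRP2 ↔ ∃ (x : Fin 3 → ℝ) (hx : rotVec x ≠ 0), p = Projectivization.mk ℂ _ hx := by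
  simp only [rotRP2, Set.mem_ofPred_eq, rotVec_eq]

theorem mk_stdVec_mem_realRP2 (j : Fin 3) :
    Projectivization.mk ℂ (stdVec j) (stdVec_ne_zero j) ∈ realRP2 :=
  ⟨stdVec j, stdVec_ne_zero j, fun k => by unfold stdVec; split_ifs <;> simp, rfl⟩

theorem mk_stdVec_mem_rotRP2 (j : Fin 3) :
    Projectivization.mk ℂ (stdVec j) (stdVec_ne_zero j) ∈ rotRP2 := by
  let x : Fin 3 → ℝ := fun k => if k = j then 1 else 0
  have hx : rotVec x ≠ 0 := fun h => by simpa [rotVec, x] using congrFun h j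
  exact mem_rotRP2_iff.2 ⟨x, hx, (mk_eq_mk_stdVec hx fun k hk => by simp [rotVec, x, hk]).symm⟩

/-- The two real projective planes `L₀` and `L₁` in `ℂP²` intersect exactly in the three
coordinate points `[1:0:0]`, `[0:1:0]`, `[0:0:1]`. -/
theorem realRP2_inter_rotRP2 :
    realRP2 ∩ rotRP2 =
      {Projectivization.mk ℂ (stdVec 0) (stdVec_ne_zero 0),
       Projectivization.mk ℂ (stdVec 1) (stdVec_ne_zero 1),
       Projectivization.mk ℂ (stdVec 2) (stdVec_ne_zero 2)} := by
  ext p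
  constructor
  · rintro ⟨⟨z, hz, hz_real, rfl⟩, hrot⟩
    obtain ⟨x, hw, hzw⟩ := mem_rotRP2_iff.1 hrot
    obtain ⟨a, rfl⟩ := (Projectivization.mk_eq_mk_iff' ℂ _ _ hz _).1 hzw
    have ha : a ≠ 0 := by rintro rfl; simp at hz
    obtain ⟨j, hj⟩ : ∃ j, x j ≠ 0 := by
      by_contra! hx
      exact hw (funext fun k => by simp [rotVec, hx])
    have hz_j : ∀ k ≠ j, (a • rotVec x) k = 0 := fun k hk => by
      simp [rotVec, eq_zero_of_im_mul_rotVec_eq_zero ha hz_real hk.symm hj]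
    rw [mk_eq_mk_stdVec hz hz_j]
    fin_cases j <;> simp
  · rintro (rfl | rfl | rfl) <;> exact ⟨mk_stdVec_mem_realRP2 _, mk_stdVec_mem_rotRP2 _⟩
end
end
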